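/- Let Φ be an orientation-preserving diffeomorphism from the periodic strip 𝕋 × [0,1] to itself, lifted to a diffeomorphism of the universal cover ℝ × [0,1] with Φ(x + 2πe₁) = Φ(x) + 2πe₁. For almost every c ∈ [0,1], the intersection of the image Φ(M) of the fundamental domain M = [0,2π] × [0,1] with the horizontal line {x₂ = c} in the cover is a finite union of closed intervals ⋃_{i=1}^{N} [p_i⁻, p_i⁺] with N odd, and for each left endpoint p_i⁻ lying on the image of the left boundary curve Φ({x₁ = 0}), the corresponding translated point p_i⁻ + 2π is a right endpoint p_{i'}⁺ lying on the image of the right boundary curve Φ({x₁ = 2π}). -/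

import Mathlib

open MeasureTheory Real Set

open Filter

lemma sign_near {f : ℝ → ℝ} {p d : ℝ} (hf : HasDerivAt f d p) (hd : d ≠ 0) (hp : f p = 0) :
    ∀ᶠ x in nhdsWithin p {p}ᶜ, f x ≠ 0 ∧ (0 < f x ↔ (0 < d ↔ p < x)) := by
  have ht : Tendsto (slope f p) (nhdsWithin p {p}ᶜ) (nhds d) :=
    hasDerivAt_iff_tendsto_slope.1 hf
  have hs : ∀ᶠ x in nhdsWithin p {p}ᶜ, (0 < slope f p x ↔ 0 < d) ∧ slope f p x ≠ 0 := by
    rcases hd.lt_or_gt with h | h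
    · filter_upwards [ht.eventually (eventually_lt_nhds h)] with x hx
      exact ⟨⟨fun h1 => absurd hx (not_lt.2 h1.le), fun h1 => absurd h (not_lt.2 h1.le)⟩,
        ne_of_lt hx⟩
    · filter_upwards [ht.eventually (eventually_gt_nhds h)] with x hx
      exact ⟨⟨fun _ => h, fun _ => hx⟩, ne_of_gt hx⟩
  filter_upwards [hs, self_mem_nhdsWithin] with x hx hxp
  have hxp' : x ≠ p := hxp
  have hsub : x - p ≠ 0 := sub_ne_zero.2 hxp'
  obtain ⟨hiff, hne⟩ := hx
  have hfx : f x = slope f p x * (x - p) := by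
    rw [slope_def_field, hp, sub_zero, div_mul_cancel₀ _ hsub]
  refine ⟨hfx ▸ mul_ne_zero hne hsub, ?_⟩
  rw [hfx, mul_pos_iff, ← hiff, show (p < x ↔ 0 < x - p) from sub_pos.symm]
  rcases hne.lt_or_gt with ha | ha <;> rcases hsub.lt_or_gt with hb | hb <;>
    simp [ha, hb, ha.not_gt, hb.not_gt]
open Filter Set

lemma sign_near' {f : ℝ → ℝ} {p d : ℝ} (hf : HasDerivAt f d p) (hd : d ≠ 0) (hp : f p = 0) :
    ∃ δ > 0, ∀ x, x ≠ p → |x - p| < δ → f x ≠ 0 ∧ (0 < f x ↔ (0 < d ↔ p < x)) := by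
  have h := (sign_near hf hd hp)
  rw [eventually_nhdsWithin_iff, Metric.eventually_nhds_iff] at h
  obtain ⟨δ, hδ, h⟩ := h
  exact ⟨δ, hδ, fun x hx1 hx2 => h (by simpa [Real.dist_eq] using hx2) hx1⟩

lemma no_zero_sign {f : ℝ → ℝ} (hf : Continuous f) {s : Set ℝ} (hs : s.OrdConnected)
    (h0 : ∀ x ∈ s, f x ≠ 0) {x y : ℝ} (hx : x ∈ s) (hy : y ∈ s) : 0 < f x ↔ 0 < f y := by
  have key : ∀ a b : ℝ, a ∈ s → b ∈ s → 0 < f a → f b < 0 → False := by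
    intro a b ha hb hfa hfb
    have h2 : (0:ℝ) ∈ uIcc (f a) (f b) := by
      rw [Set.mem_uIcc]; right; constructor <;> linarith
    obtain ⟨z, hz, hz0⟩ := intermediate_value_uIcc (f := f) (a := a) (b := b)
      (hf.continuousOn) h2
    exact h0 z (hs.uIcc_subset ha hb hz) hz0
  constructor
  · intro hpos
    by_contra hneg
    exact key x y hx hy hpos ((h0 y hy).lt_or_gt.resolve_right hneg)
  · intro hpos
    by_contra hneg
    exact key y x hy hx hpos ((h0 x hx).lt_or_gt.resolve_right hneg)
open Filter Set

lemma finite_zeros {f : ℝ → ℝ} (hf : Differentiable ℝ f)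
    (htr : ∀ x, f x = 0 → deriv f x ≠ 0) {R : ℝ} (hR : ∀ x, f x = 0 → x ∈ Set.Icc (-R) R) :
    {x : ℝ | f x = 0}.Finite := by
  set Z := {x : ℝ | f x = 0} with hZ
  have hZc : IsClosed Z := isClosed_eq hf.continuous continuous_const
  have hcomp : IsCompact Z := (isCompact_Icc (a := -R) (b := R)).of_isClosed_subset hZc
    (fun x hx => hR x hx)
  have hiso : ∀ z : Z, ∃ δ > 0, ∀ x, x ≠ (z:ℝ) → |x - (z:ℝ)| < δ → f x ≠ 0 := by
    rintro ⟨z, hz⟩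
    obtain ⟨δ, hδ, h⟩ := sign_near' (hf z).hasDerivAt (htr z hz) hz
    exact ⟨δ, hδ, fun x h1 h2 => (h x h1 h2).1⟩
  choose δ hδ hδ2 using hiso
  have hcov : Z ⊆ ⋃ z : Z, Metric.ball (z:ℝ) (δ z) := by
    intro x hx
    exact Set.mem_iUnion.2 ⟨⟨x, hx⟩, by simp [hδ ⟨x, hx⟩]⟩
  obtain ⟨t, ht⟩ := hcomp.elim_finite_subcover (fun z : Z => Metric.ball (z:ℝ) (δ z))
    (fun z => Metric.isOpen_ball) hcov
  refine Set.Finite.subset (t.finite_toSet.image (Subtype.val)) ?_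
  intro x hx
  have hx2 := ht hx
  rw [Set.mem_iUnion₂] at hx2
  obtain ⟨z, hzt, hzb⟩ := hx2
  rcases eq_or_ne x (z:ℝ) with rfl | hne
  · exact ⟨z, hzt, rfl⟩
  · exact absurd hx (hδ2 z x hne (by simpa [Real.dist_eq] using hzb))
open Filter Set

section Crossing
variable {f : ℝ → ℝ} {m : ℕ} {b : Fin m → ℝ}

lemma cross_left (hf : Differentiable ℝ f) (hb : StrictMono b)
    (hrange : ∀ x, f x = 0 ↔ ∃ i, b i = x) (htr : ∀ x, f x = 0 → deriv f x ≠ 0)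
    (hm : 0 < m) {x : ℝ} (hx : x < b ⟨0, hm⟩) :
    f x ≠ 0 ∧ (0 < f x ↔ deriv f (b ⟨0, hm⟩) < 0) := by
  set p := b ⟨0, hm⟩ with hp
  have hfp : f p = 0 := (hrange p).2 ⟨_, rfl⟩
  have hd := htr p hfp
  have hno : ∀ y ∈ Set.Iio p, f y ≠ 0 := by
    intro y hy hy0
    obtain ⟨j, hj⟩ := (hrange y).1 hy0
    have : p ≤ b j := hb.monotone (Fin.le_def.2 (Nat.zero_le _))
    rw [hj] at this
    exact absurd hy (not_lt.2 this)
  obtain ⟨δ, hδ, hsgn⟩ := sign_near' (hf p).hasDerivAt hd hfp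
  set y := p - δ/2 with hy
  have hyp : y ≠ p := by simp [hy]; linarith
  have hyd : |y - p| < δ := by rw [hy]; rw [abs_of_nonpos (by linarith)]; linarith
  have h1 := hsgn y hyp hyd
  have h2 : ¬ (p < y) := by simp [hy]; linarith
  have hsc := no_zero_sign hf.continuous (ordConnected_Iio (a := p)) hno hx
    (show y ∈ Set.Iio p by simp [hy]; linarith)
  refine ⟨hno x hx, ?_⟩
  rw [hsc, h1.2]
  simp only [h2, iff_false]
  exact ⟨fun h => hd.lt_or_gt.resolve_right h, fun h => not_lt.2 h.le⟩

lemma cross_right (hf : Differentiable ℝ f) (hb : StrictMono b)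
    (hrange : ∀ x, f x = 0 ↔ ∃ i, b i = x) (htr : ∀ x, f x = 0 → deriv f x ≠ 0)
    (hm : m - 1 < m) {x : ℝ} (hx : b ⟨m-1, hm⟩ < x) :
    f x ≠ 0 ∧ (0 < f x ↔ 0 < deriv f (b ⟨m-1, hm⟩)) := by
  set p := b ⟨m-1, hm⟩ with hp
  have hfp : f p = 0 := (hrange p).2 ⟨_, rfl⟩
  have hd := htr p hfp
  have hno : ∀ y ∈ Set.Ioi p, f y ≠ 0 := by
    intro y hy hy0
    obtain ⟨j, hj⟩ := (hrange y).1 hy0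
    have : b j ≤ p := hb.monotone (by exact Fin.le_def.2 (Nat.le_sub_one_of_lt j.2))
    rw [hj] at this
    exact absurd hy (not_lt.2 this)
  obtain ⟨δ, hδ, hsgn⟩ := sign_near' (hf p).hasDerivAt hd hfp
  set y := p + δ/2 with hy
  have hyp : y ≠ p := by simp [hy]; linarith
  have hyd : |y - p| < δ := by rw [hy]; rw [abs_of_nonneg (by linarith)]; linarith
  have h1 := hsgn y hyp hyd
  have h2 : p < y := by simp [hy]; linarith
  have hsc := no_zero_sign hf.continuous (ordConnected_Ioi (a := p)) hno hx
    (show y ∈ Set.Ioi p by simp [hy]; linarith)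
  refine ⟨hno x hx, ?_⟩
  rw [hsc, h1.2]
  simp [h2]

lemma cross_gap (hf : Differentiable ℝ f) (hb : StrictMono b)
    (hrange : ∀ x, f x = 0 ↔ ∃ i, b i = x) (htr : ∀ x, f x = 0 → deriv f x ≠ 0)
    {i : ℕ} (hi : i + 1 < m) {x : ℝ}
    (hx1 : b ⟨i, by omega⟩ < x) (hx2 : x < b ⟨i+1, hi⟩) :
    f x ≠ 0 ∧ (0 < f x ↔ 0 < deriv f (b ⟨i, by omega⟩)) ∧
      (0 < f x ↔ deriv f (b ⟨i+1, hi⟩) < 0) := by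
  set p := b ⟨i, by omega⟩ with hp
  set q := b ⟨i+1, hi⟩ with hq
  have hpq : p < q := hb (by simp [Fin.lt_def])
  have hfp : f p = 0 := (hrange p).2 ⟨_, rfl⟩
  have hfq : f q = 0 := (hrange q).2 ⟨_, rfl⟩
  have hdp := htr p hfp
  have hdq := htr q hfq
  have hno : ∀ y ∈ Set.Ioo p q, f y ≠ 0 := by
    intro y hy hy0
    obtain ⟨j, hj⟩ := (hrange y).1 hy0
    subst hj
    have h1 : (⟨i, by omega⟩ : Fin m) < j := hb.lt_iff_lt.1 hy.1
    have h2 : j < (⟨i+1, hi⟩ : Fin m) := hb.lt_iff_lt.1 hy.2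
    simp only [Fin.lt_def, Fin.val_mk] at h1 h2
    omega
  have hoc : Set.OrdConnected (Set.Ioo p q) := ordConnected_Ioo
  refine ⟨hno x ⟨hx1, hx2⟩, ?_, ?_⟩
  · obtain ⟨δ, hδ, hsgn⟩ := sign_near' (hf p).hasDerivAt hdp hfp
    set y := p + min δ (q - p) / 2 with hy
    have hmin : 0 < min δ (q - p) := lt_min hδ (by linarith)
    have hymem : y ∈ Set.Ioo p q := by
      constructor
      · simp only [hy]; linarith
      · have : min δ (q-p) ≤ q - p := min_le_right _ _
        simp only [hy]; linarith
    have h1 := hsgn y (ne_of_gt hymem.1) (by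
      rw [abs_of_nonneg (by simp only [hy]; linarith)]
      have : min δ (q-p) ≤ δ := min_le_left _ _
      simp only [hy]; linarith)
    have hsc := no_zero_sign hf.continuous hoc hno (⟨hx1, hx2⟩ : x ∈ Set.Ioo p q) hymem
    rw [hsc, h1.2]
    simp [hymem.1]
  · obtain ⟨δ, hδ, hsgn⟩ := sign_near' (hf q).hasDerivAt hdq hfq
    set y := q - min δ (q - p) / 2 with hy
    have hmin : 0 < min δ (q - p) := lt_min hδ (by linarith)
    have hymem : y ∈ Set.Ioo p q := by
      constructor
      · have : min δ (q-p) ≤ q - p := min_le_right _ _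
        simp only [hy]; linarith
      · simp only [hy]; linarith
    have h1 := hsgn y (ne_of_lt hymem.2) (by
      rw [abs_of_nonpos (by simp only [hy]; linarith)]
      have : min δ (q-p) ≤ δ := min_le_left _ _
      simp only [hy]; linarith)
    have hsc := no_zero_sign hf.continuous hoc hno (⟨hx1, hx2⟩ : x ∈ Set.Ioo p q) hymem
    have h2 : ¬ (q < y) := not_lt.2 hymem.2.le
    rw [hsc, h1.2]
    simp only [h2, iff_false]
    exact ⟨fun h => hdq.lt_or_gt.resolve_right h, fun h => not_lt.2 h.le⟩

end Crossing
open Filter Set Real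

lemma alt_parity {m : ℕ} (d : ℕ → Prop) (h0 : d 0)
    (halt : ∀ i, i + 1 < m → (d (i+1) ↔ ¬ d i)) : ∀ i, i < m → (d i ↔ Even i) := by
  intro i
  induction i with
  | zero => intro _; simpa using h0
  | succ n ih =>
    intro h
    rw [halt n h, ih (by omega), Nat.even_add_one]

theorem main1d {u : ℝ → ℝ} (hu : Differentiable ℝ u)
    (hper : ∀ s, u (s + 2*π) = u s + 2*π)
    (htr : ∀ s, u s = 0 → deriv u s ≠ 0) :
    ∃ N : ℕ, Odd N ∧ ∃ pm pp : Fin N → ℝ,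
      (∀ i, pm i ≤ pp i) ∧ (∀ i j : Fin N, i < j → pp i < pm j) ∧
      ({x : ℝ | u x ∈ Set.Icc 0 (2*π)} = ⋃ i, Set.Icc (pm i) (pp i)) ∧
      (∀ i, u (pm i) = 0 → ∃ j, pp j = pm i + 2*π ∧ u (pp j) = 2*π) := by
  have hπ : 0 < 2*π := by positivity
  -- derivative periodicity
  have hderiv_per : ∀ s, deriv u (s + 2*π) = deriv u s := by
    intro s
    have h1 : (fun x => u (x + 2*π)) = fun x => u x + 2*π := funext hper
    have := deriv_comp_add_const (f := u) (a := 2*π) (x := s)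
    rw [h1] at this
    rw [← this, deriv_add_const]
  -- bound: u is within C of the identity
  obtain ⟨C, hC⟩ : ∃ C, ∀ s, |u s - s| ≤ C := by
    have hgper : Function.Periodic (fun s => u s - s) (2*π) := by
      intro s; simp only [hper]; ring
    obtain ⟨C, hC⟩ := (isCompact_Icc (a := (0:ℝ)) (b := 2*π)).exists_bound_of_continuousOn
      ((hu.continuous.sub continuous_id).continuousOn)
    refine ⟨C, fun s => ?_⟩
    obtain ⟨y, hy, hxy⟩ := hgper.exists_mem_Ico₀ hπ s
    rw [hxy]
    exact hC y (Set.mem_Icc.2 ⟨hy.1, hy.2.le⟩)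
  have hC0 : 0 ≤ C := le_trans (abs_nonneg _) (hC 0)
  -- transversality at both levels
  have htr2 : ∀ s, u s = 2*π → deriv u s ≠ 0 := by
    intro s hs
    have h1 : u (s - 2*π) = 0 := by
      have := hper (s - 2*π); rw [sub_add_cancel] at this; linarith
    have h2 := htr _ h1
    have := hderiv_per (s - 2*π)
    rw [sub_add_cancel] at this
    rw [this]; exact h2
  -- the auxiliary function w
  set w : ℝ → ℝ := fun s => u s * (u s - 2*π) with hw
  have hwzero : ∀ s, w s = 0 ↔ u s = 0 ∨ u s = 2*π := by
    intro s; rw [hw]; simp only [mul_eq_zero, sub_eq_zero]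
  have hwderiv : ∀ s, HasDerivAt w (deriv u s * (2 * u s - 2*π)) s := by
    intro s
    have h1 := ((hu s).hasDerivAt.mul ((hu s).hasDerivAt.sub_const (2*π)))
    exact h1.congr_deriv (by ring)
  have hwdiff : Differentiable ℝ w := fun s => (hwderiv s).differentiableAt
  have hwderiv' : ∀ s, deriv w s = deriv u s * (2 * u s - 2*π) := fun s => (hwderiv s).deriv
  have htrw : ∀ s, w s = 0 → deriv w s ≠ 0 := by
    intro s hs
    rw [hwderiv']
    rcases (hwzero s).1 hs with h | h
    · rw [h]; exact mul_ne_zero (htr s h) (by linarith)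
    · rw [h]; exact mul_ne_zero (htr2 s h) (by linarith)
  -- zero sets
  have hAfin : {s : ℝ | u s = 0}.Finite := by
    apply finite_zeros hu htr (R := C)
    intro x hx
    have := hC x; rw [hx] at this
    rw [abs_le] at this
    constructor <;> linarith [this.1, this.2]
  have hBfin : {s : ℝ | w s = 0}.Finite := by
    apply finite_zeros hwdiff htrw (R := C + 2*π)
    intro x hx
    have h2 := hC x
    rw [abs_le] at h2
    rcases (hwzero x).1 hx with h | h <;> rw [h] at h2 <;>
      constructor <;> linarith [h2.1, h2.2]
  -- nonemptiness of A
  have hAne : {s : ℝ | u s = 0}.Nonempty := by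
    have h1 : u (-(C+1)) < 0 := by
      have := hC (-(C+1)); rw [abs_le] at this; linarith [this.2]
    have h2 : 0 < u (C+1) := by
      have := hC (C+1); rw [abs_le] at this; linarith [this.1]
    obtain ⟨z, _, hz⟩ := intermediate_value_Icc (by linarith : -(C+1) ≤ C+1)
      hu.continuous.continuousOn (Set.mem_Icc.2 ⟨h1.le, h2.le⟩)
    exact ⟨z, hz⟩
  -- enumerations
  set Af := hAfin.toFinset with hAf
  set Bf := hBfin.toFinset with hBf
  set k := Af.card with hk
  set m := Bf.card with hm'
  have hBfeq : Bf = Af ∪ Af.image (· + 2*π) := by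
    ext x
    simp only [hBf, hAf, Set.Finite.mem_toFinset, Set.mem_setOf_eq, Finset.mem_union,
      Finset.mem_image]
    rw [hwzero]
    constructor
    · rintro (h | h)
      · exact Or.inl h
      · refine Or.inr ⟨x - 2*π, ?_, by ring⟩
        have := hper (x - 2*π); rw [sub_add_cancel] at this; linarith
    · rintro (h | ⟨a, ha, rfl⟩)
      · exact Or.inl h
      · right
        rw [hper a, ha, zero_add]
  have hdisj : Disjoint Af (Af.image (· + 2*π)) := by
    rw [Finset.disjoint_left]
    rintro x hx hx2
    obtain ⟨a, ha, rfl⟩ := Finset.mem_image.1 hx2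
    simp only [hAf, Set.Finite.mem_toFinset, Set.mem_setOf_eq] at hx ha
    rw [hper a, ha, zero_add] at hx
    linarith
  have hmk : m = 2 * k := by
    rw [hm', hBfeq, Finset.card_union_of_disjoint hdisj,
      Finset.card_image_of_injective _ (add_left_injective _)]
    omega
  have hk1 : 1 ≤ k := by
    obtain ⟨z, hz⟩ := hAne
    exact Finset.card_pos.2 ⟨z, (Set.Finite.mem_toFinset _).2 hz⟩
  -- sorted enumerations
  set ea := Af.orderIsoOfFin (rfl : Af.card = k) with hea
  set a : Fin k → ℝ := fun i => (ea i : ℝ) with ha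
  have hamono : StrictMono a := fun i j hij => by
    exact_mod_cast Subtype.coe_lt_coe.2 (ea.strictMono hij)
  have hrangeA : ∀ x, u x = 0 ↔ ∃ i, a i = x := by
    intro x
    constructor
    · intro hx
      have hx' : x ∈ Af := (Set.Finite.mem_toFinset _).2 hx
      exact ⟨ea.symm ⟨x, hx'⟩, by simp [ha]⟩
    · rintro ⟨i, rfl⟩
      have h2 : (a i) ∈ Af := (ea i).2
      rw [hAf, Set.Finite.mem_toFinset] at h2; exact h2
  set eb := Bf.orderIsoOfFin (rfl : Bf.card = m) with heb
  set b : Fin m → ℝ := fun i => (eb i : ℝ) with hb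
  have hbmono : StrictMono b := fun i j hij => by
    exact_mod_cast Subtype.coe_lt_coe.2 (eb.strictMono hij)
  have hrangeB : ∀ x, w x = 0 ↔ ∃ i, b i = x := by
    intro x
    constructor
    · intro hx
      have hx' : x ∈ Bf := (Set.Finite.mem_toFinset _).2 hx
      exact ⟨eb.symm ⟨x, hx'⟩, by simp [hb]⟩
    · rintro ⟨i, rfl⟩
      have h2 : (b i) ∈ Bf := (eb i).2
      rw [hBf, Set.Finite.mem_toFinset] at h2; exact h2
  -- far-field signs of u
  have hfar_left : ∀ x : ℝ, x ≤ -(C+1) → u x < 0 := by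
    intro x hx
    have := hC x; rw [abs_le] at this; linarith [this.2]
  have hfar_right : ∀ x : ℝ, C+1 ≤ x → 0 < u x := by
    intro x hx
    have := hC x; rw [abs_le] at this; linarith [this.1]
  -- parity of k
  set dA : ℕ → Prop := fun i => ∀ h : i < k, 0 < deriv u (a ⟨i, h⟩) with hdA
  have hdA0 : dA 0 := by
    intro h
    set x := min (a ⟨0,h⟩ - 1) (-(C+1)) with hx
    have h1 := cross_left hu hamono hrangeA htr h
      (x := x) (lt_of_le_of_lt (min_le_left _ _) (by linarith))
    have h2 : u x < 0 := hfar_left x (min_le_right _ _)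
    have h3 : ¬ (deriv u (a ⟨0,h⟩) < 0) := fun hd => (not_lt.2 h2.le) (h1.2.2 hd)
    exact (htr _ ((hrangeA _).2 ⟨_, rfl⟩)).lt_or_gt.resolve_left h3
  have hdAlast : dA (k-1) := by
    intro h
    set x := max (a ⟨k-1,h⟩ + 1) (C+1) with hx
    have h1 := cross_right hu hamono hrangeA htr h
      (x := x) (lt_of_lt_of_le (by linarith) (le_max_left _ _))
    have h2 : 0 < u x := hfar_right x (le_max_right _ _)
    exact h1.2.1 h2
  have haltA : ∀ i, i + 1 < k → (dA (i+1) ↔ ¬ dA i) := by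
    intro i hi
    have hik : i < k := by omega
    have hlt : a ⟨i, hik⟩ < a ⟨i+1, hi⟩ := hamono (by simp [Fin.lt_def])
    set x := (a ⟨i, hik⟩ + a ⟨i+1, hi⟩)/2 with hx
    have hgap := cross_gap hu hamono hrangeA htr hi
      (x := x) (by rw [hx]; linarith) (by rw [hx]; linarith)
    have hd1 : deriv u (a ⟨i, hik⟩) ≠ 0 := htr _ ((hrangeA _).2 ⟨_, rfl⟩)
    have hd2 : deriv u (a ⟨i+1, hi⟩) ≠ 0 := htr _ ((hrangeA _).2 ⟨_, rfl⟩)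
    constructor
    · intro hp hdAi
      have h1 : 0 < u x := hgap.2.1.2 (hdAi hik)
      have h2 : deriv u (a ⟨i+1, hi⟩) < 0 := hgap.2.2.1 h1
      exact absurd (hp hi) (not_lt.2 h2.le)
    · intro hn h
      by_contra hneg
      have h2 : deriv u (a ⟨i+1, hi⟩) < 0 := hd2.lt_or_gt.resolve_right hneg
      have h1 : 0 < u x := hgap.2.2.2 h2
      have h3 : 0 < deriv u (a ⟨i, hik⟩) := hgap.2.1.1 h1
      exact hn (fun _ => h3)
  have hOddk : Odd k := by
    have hpar := alt_parity dA hdA0 haltA (k-1) (by omega)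
    obtain ⟨t, ht⟩ := hpar.1 hdAlast
    exact ⟨t, by omega⟩
  -- structure of K via w
  have hm2 : m = 2*k := hmk
  have h0m : 0 < m := by omega
  set dB : ℕ → Prop := fun i => ∀ h : i < m, deriv w (b ⟨i, h⟩) < 0 with hdB
  have hdB0 : dB 0 := by
    intro h
    set x := min (b ⟨0,h⟩ - 1) (-(C+1)) with hx
    have h1 := cross_left hwdiff hbmono hrangeB htrw h
      (x := x) (lt_of_le_of_lt (min_le_left _ _) (by linarith))
    have h2 : u x < 0 := hfar_left x (min_le_right _ _)
    have h3 : 0 < w x := by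
      rw [hw]; exact mul_pos_of_neg_of_neg h2 (by linarith)
    exact h1.2.1 h3
  have haltB : ∀ i, i + 1 < m → (dB (i+1) ↔ ¬ dB i) := by
    intro i hi
    have him : i < m := by omega
    have hlt : b ⟨i, him⟩ < b ⟨i+1, hi⟩ := hbmono (by simp [Fin.lt_def])
    set x := (b ⟨i, him⟩ + b ⟨i+1, hi⟩)/2 with hx
    have hgap := cross_gap hwdiff hbmono hrangeB htrw hi
      (x := x) (by rw [hx]; linarith) (by rw [hx]; linarith)
    have hd1 : deriv w (b ⟨i, him⟩) ≠ 0 := htrw _ ((hrangeB _).2 ⟨_, rfl⟩)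
    have hd2 : deriv w (b ⟨i+1, hi⟩) ≠ 0 := htrw _ ((hrangeB _).2 ⟨_, rfl⟩)
    constructor
    · intro hp hdBi
      have h2 : deriv w (b ⟨i+1, hi⟩) < 0 := hp hi
      have h1 : 0 < w x := hgap.2.2.2 h2
      have h3 : 0 < deriv w (b ⟨i, him⟩) := hgap.2.1.1 h1
      exact absurd (hdBi him) (not_lt.2 h3.le)
    · intro hn h
      by_contra hneg
      have h3 : 0 < deriv w (b ⟨i+1, hi⟩) := hd2.lt_or_gt.resolve_left hneg
      have h4 : ¬ (0 < w x) := fun h1 => (not_lt.2 (hgap.2.2.1 h1).le) h3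
      have h5 : ¬ (0 < deriv w (b ⟨i, him⟩)) := fun h6 => h4 (hgap.2.1.2 h6)
      exact hn (fun _ => hd1.lt_or_gt.resolve_right h5)
  have hparB := alt_parity dB hdB0 haltB
  have hgapsign : ∀ (i : ℕ) (hi : i+1 < m) (x : ℝ), b ⟨i, by omega⟩ < x → x < b ⟨i+1, hi⟩ →
      (w x < 0 ↔ Even i) := by
    intro i hi x hx1 hx2
    have hgap := cross_gap hwdiff hbmono hrangeB htrw hi (x := x) hx1 hx2
    have him : i < m := by omega
    constructor
    · intro hneg
      by_contra heven
      have h1 : ¬ dB i := fun hd => heven ((hparB i him).1 hd)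
      have hd1 : deriv w (b ⟨i, him⟩) ≠ 0 := htrw _ ((hrangeB _).2 ⟨_, rfl⟩)
      have h2 : 0 < deriv w (b ⟨i, him⟩) :=
        hd1.lt_or_gt.resolve_left (fun hneg2 => h1 (fun _ => hneg2))
      exact absurd (hgap.2.1.2 h2) (not_lt.2 hneg.le)
    · intro heven
      have h1 : dB i := (hparB i him).2 heven
      have h2 : ¬ (0 < w x) := fun hp => absurd (hgap.2.1.1 hp) (not_lt.2 (h1 him).le)
      exact (hgap.1.lt_or_gt).resolve_right h2
  have hleftw : ∀ x : ℝ, x < b ⟨0, h0m⟩ → 0 < w x := by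
    intro x hx
    have h1 := cross_left hwdiff hbmono hrangeB htrw h0m (x := x) hx
    exact h1.2.2 (hdB0 h0m)
  have hm1m : m - 1 < m := by omega
  have hrightw : ∀ x : ℝ, b ⟨m-1, hm1m⟩ < x → 0 < w x := by
    intro x hx
    have h1 := cross_right hwdiff hbmono hrangeB htrw hm1m (x := x) hx
    have hodd : ¬ Even (m-1) := by
      rw [Nat.not_even_iff_odd]
      exact ⟨k-1, by omega⟩
    have h2 : ¬ dB (m-1) := fun hd => hodd ((hparB (m-1) hm1m).1 hd)
    have hd1 : deriv w (b ⟨m-1, hm1m⟩) ≠ 0 := htrw _ ((hrangeB _).2 ⟨_, rfl⟩)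
    have h3 : 0 < deriv w (b ⟨m-1, hm1m⟩) := by
      rcases hd1.lt_or_gt with hlt | hgt
      · exact absurd (fun _ : m - 1 < m => hlt) h2
      · exact hgt
    exact h1.2.2 h3
  -- the intervals
  have hjm : ∀ j : Fin k, 2*j.1 < m := fun j => by omega
  have hjm1 : ∀ j : Fin k, 2*j.1+1 < m := fun j => by omega
  refine ⟨k, hOddk, fun j => b ⟨2*j.1, hjm j⟩, fun j => b ⟨2*j.1+1, hjm1 j⟩, ?_, ?_, ?_, ?_⟩
  · intro j
    exact (hbmono (Fin.mk_lt_mk.2 (by omega))).le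
  · intro i j hij
    have : i.1 < j.1 := hij
    exact hbmono (Fin.mk_lt_mk.2 (by omega))
  · ext x
    simp only [Set.mem_setOf_eq, Set.mem_iUnion, Set.mem_Icc]
    constructor
    · intro hx
      have hwle : w x ≤ 0 := by
        show u x * (u x - 2*π) ≤ 0
        nlinarith [hx.1, hx.2]
      rcases hwle.lt_or_eq with hwlt | hweq
      · -- interior case
        have hb0x : b ⟨0, h0m⟩ < x := by
          rcases lt_trichotomy x (b ⟨0,h0m⟩) with h | h | h
          · exact absurd hwlt (not_lt.2 (hleftw x h).le)
          · exfalso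
            have h2 : w x = 0 := (hrangeB x).2 ⟨_, h.symm⟩
            rw [h2] at hwlt; exact lt_irrefl 0 hwlt
          · exact h
        have hxbm : x < b ⟨m-1, hm1m⟩ := by
          rcases lt_trichotomy x (b ⟨m-1,hm1m⟩) with h | h | h
          · exact h
          · exfalso
            have h2 : w x = 0 := (hrangeB x).2 ⟨_, h.symm⟩
            rw [h2] at hwlt; exact lt_irrefl 0 hwlt
          · exact absurd hwlt (not_lt.2 (hrightw x h).le)
        set S : Finset (Fin m) := Finset.univ.filter (fun i => b i < x) with hS
        have hS0 : (⟨0,h0m⟩ : Fin m) ∈ S := by simp [hS, hb0x]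
        have hSne : S.Nonempty := ⟨_, hS0⟩
        set i0 := S.max' hSne with hi0
        have hSmem : ∀ i ∈ S, b i < x := by
          intro i hi
          rw [hS, Finset.mem_filter] at hi
          exact hi.2
        have hi0x : b i0 < x := hSmem _ (S.max'_mem hSne)
        have hi0m : i0.1 + 1 < m := by
          rcases Nat.lt_or_ge (i0.1+1) m with h | h
          · exact h
          · exfalso
            have h1 : i0.1 = m-1 := by omega
            have heq : i0 = ⟨m-1, hm1m⟩ := Fin.ext h1
            rw [heq] at hi0x
            exact absurd hxbm (not_lt.2 hi0x.le)
        have hxi1 : x < b ⟨i0.1+1, hi0m⟩ := by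
          rcases lt_trichotomy x (b ⟨i0.1+1,hi0m⟩) with h | h | h
          · exact h
          · exfalso
            have h2 : w x = 0 := (hrangeB x).2 ⟨_, h.symm⟩
            rw [h2] at hwlt; exact lt_irrefl 0 hwlt
          · exfalso
            have hmem : (⟨i0.1+1, hi0m⟩ : Fin m) ∈ S := by
              rw [hS, Finset.mem_filter]; exact ⟨Finset.mem_univ _, h⟩
            have hle := S.le_max' _ hmem
            rw [← hi0] at hle
            have : i0.1 + 1 ≤ i0.1 := hle
            omega
        have heven : Even i0.1 := (hgapsign i0.1 hi0m x hi0x hxi1).1 hwlt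
        obtain ⟨j, hj⟩ := heven
        have hjk : j < k := by omega
        refine ⟨⟨j, hjk⟩, ?_, ?_⟩
        · show b ⟨2*j, hjm ⟨j,hjk⟩⟩ ≤ x
          have heq : (⟨2*j, hjm ⟨j,hjk⟩⟩ : Fin m) = i0 := Fin.ext (by simp; omega)
          rw [heq]; exact hi0x.le
        · show x ≤ b ⟨2*j+1, hjm1 ⟨j,hjk⟩⟩
          have heq : (⟨2*j+1, hjm1 ⟨j,hjk⟩⟩ : Fin m) = ⟨i0.1+1, hi0m⟩ := Fin.ext (by simp; omega)
          rw [heq]; exact hxi1.le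
      · -- boundary case
        obtain ⟨i, hib⟩ := (hrangeB x).1 hweq
        rcases Nat.even_or_odd i.1 with ⟨j,hj⟩ | ⟨j,hj⟩
        · have hjk : j < k := by have := i.2; omega
          refine ⟨⟨j, hjk⟩, ?_, ?_⟩
          · show b ⟨2*j, hjm ⟨j,hjk⟩⟩ ≤ x
            have heq : (⟨2*j, hjm ⟨j,hjk⟩⟩ : Fin m) = i := Fin.ext (by simp; omega)
            rw [heq, hib]
          · show x ≤ b ⟨2*j+1, hjm1 ⟨j,hjk⟩⟩
            have heq : (⟨2*j, hjm ⟨j,hjk⟩⟩ : Fin m) = i := Fin.ext (by simp; omega)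
            rw [← hib, ← heq]
            exact (hbmono (Fin.mk_lt_mk.2 (by omega))).le
        · have hjk : j < k := by have := i.2; omega
          refine ⟨⟨j, hjk⟩, ?_, ?_⟩
          · show b ⟨2*j, hjm ⟨j,hjk⟩⟩ ≤ x
            have heq : (⟨2*j+1, hjm1 ⟨j,hjk⟩⟩ : Fin m) = i := Fin.ext (by simp; omega)
            rw [← hib, ← heq]
            exact (hbmono (Fin.mk_lt_mk.2 (by omega))).le
          · show x ≤ b ⟨2*j+1, hjm1 ⟨j,hjk⟩⟩
            have heq : (⟨2*j+1, hjm1 ⟨j,hjk⟩⟩ : Fin m) = i := Fin.ext (by simp; omega)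
            rw [heq, hib]
    · rintro ⟨j, hj1, hj2⟩
      rcases hj1.eq_or_lt with heq | hlt1
      · have hwx : w x = 0 := (hrangeB x).2 ⟨⟨2*j.1, hjm j⟩, heq⟩
        rcases (hwzero x).1 hwx with h | h <;> rw [h] <;> exact ⟨by linarith, by linarith⟩
      · rcases hj2.eq_or_lt with heq2 | hlt2
        · have hwx : w x = 0 := (hrangeB x).2 ⟨⟨2*j.1+1, hjm1 j⟩, heq2.symm⟩
          rcases (hwzero x).1 hwx with h | h <;> rw [h] <;> exact ⟨by linarith, by linarith⟩
        · have hwneg : w x < 0 :=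
            (hgapsign (2*j.1) (hjm1 j) x hlt1 hlt2).2 ⟨j.1, by ring⟩
          have hwneg' : u x * (u x - 2*π) < 0 := hwneg
          rcases mul_neg_iff.1 hwneg' with ⟨h1,h2⟩ | ⟨h1,h2⟩
          · exact ⟨h1.le, by linarith⟩
          · exact absurd h1 (not_lt.2 (by linarith))
  · -- matching of endpoints
    intro j hj
    set q := b ⟨2*j.1, hjm j⟩ + 2*π with hq
    have huq : u q = 2*π := by rw [hq, hper, hj, zero_add]
    have hwq : w q = 0 := (hwzero q).2 (Or.inr huq)
    obtain ⟨i, hib⟩ := (hrangeB q).1 hwq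
    have hdwpm : deriv w (b ⟨2*j.1, hjm j⟩) < 0 :=
      ((hparB (2*j.1) (hjm j)).2 ⟨j.1, by ring⟩) (hjm j)
    have hdupm : 0 < deriv u (b ⟨2*j.1, hjm j⟩) := by
      rw [hwderiv', hj] at hdwpm
      nlinarith [hπ]
    have hduq : deriv u q = deriv u (b ⟨2*j.1, hjm j⟩) := hderiv_per _
    have hdwq : 0 < deriv w q := by
      rw [hwderiv', huq, hduq]
      nlinarith [hπ]
    have hoddi : ¬ Even i.1 := by
      intro he
      have h1 : dB i.1 := (hparB i.1 i.2).2 he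
      have h2 := h1 i.2
      rw [show (⟨i.1, i.2⟩ : Fin m) = i from Fin.ext rfl, hib] at h2
      exact absurd hdwq (not_lt.2 h2.le)
    obtain ⟨j', hj'⟩ := Nat.not_even_iff_odd.1 hoddi
    have hj'k : j' < k := by have := i.2; omega
    refine ⟨⟨j', hj'k⟩, ?_, ?_⟩
    · show b ⟨2*j'+1, hjm1 ⟨j',hj'k⟩⟩ = q
      have heq : (⟨2*j'+1, hjm1 ⟨j',hj'k⟩⟩ : Fin m) = i := Fin.ext (by simp; omega)
      rw [heq, hib]
    · show u (b ⟨2*j'+1, hjm1 ⟨j',hj'k⟩⟩) = 2*π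
      have heq : (⟨2*j'+1, hjm1 ⟨j',hj'k⟩⟩ : Fin m) = i := Fin.ext (by simp; omega)
      rw [heq, hib]; exact huq
open Filter Set Real MeasureTheory

lemma sard1d {h : ℝ → ℝ} (hh : Differentiable ℝ h) :
    volume (h '' {t | deriv h t = 0}) = 0 := by
  apply MeasureTheory.addHaar_image_eq_zero_of_det_fderivWithin_eq_zero (μ := volume)
    (f' := fun _ => (0 : ℝ →L[ℝ] ℝ))
  · intro x hx
    have h1 : HasDerivAt h 0 x := by
      have h2 := (hh x).hasDerivAt
      rwa [show deriv h x = 0 from hx] at h2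
    have h3 := h1.hasFDerivAt
    have h4 : ContinuousLinearMap.toSpanSingleton ℝ (0:ℝ) = 0 := by
      ext z; simp
    rw [h4] at h3
    exact h3.hasFDerivWithinAt
  · intro x _
    simp [ContinuousLinearMap.det]
/-- The fundamental domain `M = [0,2π] × [0,1]` of the periodic strip in the cover. -/
noncomputable def fundDom : Set (ℝ × ℝ) := (Set.Icc (0:ℝ) (2*π)) ×ˢ (Set.Icc (0:ℝ) 1)

/-- **Lemma (structure of horizontal slices of the image of the fundamental domain).**
Let `Φ` be an orientation-preserving diffeomorphism of the strip `ℝ × [0,1]`, commuting with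
the deck translation by `2πe₁`. For almost every `c ∈ [0,1]`, the slice
`Φ([0,2π]×[0,1]) ∩ {x₂ = c}` is a finite union of `N` closed intervals `[pᵢ⁻, pᵢ⁺]` with `N`
odd, and each left endpoint on the image of the left boundary `Φ({x₁=0})` is matched, after
translation by `2π`, with a right endpoint on the image of the right boundary `Φ({x₁=2π})`. -/
theorem slice_structure_of_fundamental_domain_image
    (Φ Ψ : ℝ × ℝ → ℝ × ℝ)
    (hΦ : ContDiff ℝ (⊤ : ℕ∞) Φ) (hΨ : ContDiff ℝ (⊤ : ℕ∞) Ψ)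
    (hinv : Function.LeftInverse Ψ Φ ∧ Function.RightInverse Ψ Φ)
    (hper : ∀ x : ℝ × ℝ, Φ (x.1 + 2*π, x.2) = ((Φ x).1 + 2*π, (Φ x).2))
    (hstrip : ∀ x : ℝ × ℝ, x.2 ∈ Set.Icc (0:ℝ) 1 ↔ (Φ x).2 ∈ Set.Icc (0:ℝ) 1)
    (hbot : ∀ x : ℝ × ℝ, x.2 = 0 → (Φ x).2 = 0)
    (horient : ∀ x : ℝ × ℝ, 0 < LinearMap.det ((fderiv ℝ Φ x) : ℝ × ℝ →ₗ[ℝ] ℝ × ℝ)) :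
    ∀ᵐ c ∂(volume.restrict (Set.Icc (0:ℝ) 1)),
      ∃ N : ℕ, Odd N ∧ ∃ pm pp : Fin N → ℝ,
        (∀ i, pm i ≤ pp i) ∧
        (∀ i j : Fin N, i < j → pp i < pm j) ∧
        {x₁ : ℝ | (x₁, c) ∈ Φ '' fundDom} = ⋃ i, Set.Icc (pm i) (pp i) ∧
        (∀ i : Fin N,
          (pm i, c) ∈ Φ '' ({(0:ℝ)} ×ˢ Set.Icc (0:ℝ) 1) →
          ∃ j : Fin N, pp j = pm i + 2*π ∧
            (pp j, c) ∈ Φ '' ({(2*π:ℝ)} ×ˢ Set.Icc (0:ℝ) 1)) := by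
  obtain ⟨hΨΦ, hΦΨ⟩ := hinv
  have hΦd : Differentiable ℝ Φ := hΦ.differentiable (by simp)
  have hΨd : Differentiable ℝ Ψ := hΨ.differentiable (by simp)
  have hΦinj : Function.Injective Φ := hΨΦ.injective
  have hΨper : ∀ y : ℝ × ℝ, Ψ (y.1 + 2*π, y.2) = ((Ψ y).1 + 2*π, (Ψ y).2) := by
    intro y
    have h1 := hper (Ψ y)
    rw [hΦΨ y] at h1
    apply hΦinj
    rw [hΦΨ, h1]
  -- the height function of the left boundary curve
  set h : ℝ → ℝ := fun t => (Φ (0, t)).2 with hdefh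
  have hcurve : ∀ t : ℝ, HasDerivAt (fun t : ℝ => ((0:ℝ), t)) ((0:ℝ), (1:ℝ)) t :=
    fun t => HasDerivAt.prodMk (hasDerivAt_const t (0:ℝ)) (hasDerivAt_id t)
  have hhd : ∀ t, HasDerivAt h ((fderiv ℝ Φ (0, t) ((0:ℝ), (1:ℝ))).2) t := by
    intro t
    have h1 := (hΦd (0, t)).hasFDerivAt.comp_hasDerivAt t (hcurve t)
    exact (ContinuousLinearMap.snd ℝ ℝ ℝ).hasFDerivAt.comp_hasDerivAt t h1
  have hhdiff : Differentiable ℝ h := fun t => (hhd t).differentiableAt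
  have hhderiv : ∀ t, deriv h t = (fderiv ℝ Φ (0, t) ((0:ℝ), (1:ℝ))).2 :=
    fun t => (hhd t).deriv
  -- a.e. selection
  have hae1 : ∀ᵐ c ∂(volume.restrict (Set.Icc (0:ℝ) 1)), c ∈ Set.Icc (0:ℝ) 1 :=
    ae_restrict_mem measurableSet_Icc
  have hae2 : ∀ᵐ c ∂(volume.restrict (Set.Icc (0:ℝ) 1)),
      c ∉ h '' {t | deriv h t = 0} :=
    ae_restrict_of_ae (measure_eq_zero_iff_ae_notMem.1 (sard1d hhdiff))
  filter_upwards [hae1, hae2] with c hc hcZ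
  -- the 1d function u
  set u : ℝ → ℝ := fun s => (Ψ (s, c)).1 with hdefu
  have hucurve : ∀ s : ℝ, HasDerivAt (fun s : ℝ => (s, c)) ((1:ℝ), (0:ℝ)) s :=
    fun s => HasDerivAt.prodMk (hasDerivAt_id s) (hasDerivAt_const s c)
  have hud : ∀ s, HasDerivAt u ((fderiv ℝ Ψ (s, c) ((1:ℝ), (0:ℝ))).1) s := by
    intro s
    have h1 := (hΨd (s, c)).hasFDerivAt.comp_hasDerivAt s (hucurve s)
    exact (ContinuousLinearMap.fst ℝ ℝ ℝ).hasFDerivAt.comp_hasDerivAt s h1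
  have hudiff : Differentiable ℝ u := fun s => (hud s).differentiableAt
  have huderiv : ∀ s, deriv u s = (fderiv ℝ Ψ (s, c) ((1:ℝ), (0:ℝ))).1 :=
    fun s => (hud s).deriv
  have huper : ∀ s, u (s + 2*π) = u s + 2*π := by
    intro s
    simpa using congrArg Prod.fst (hΨper (s, c))
  have hstripΨ : ∀ s : ℝ, (Ψ (s, c)).2 ∈ Set.Icc (0:ℝ) 1 := by
    intro s
    have h1 := (hstrip (Ψ (s, c))).2
    rw [hΦΨ (s, c)] at h1
    exact h1 hc
  have hABid : ∀ y : ℝ × ℝ, ∀ v : ℝ × ℝ, fderiv ℝ Φ (Ψ y) (fderiv ℝ Ψ y v) = v := by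
    intro y v
    have h1 : HasFDerivAt (Φ ∘ Ψ) ((fderiv ℝ Φ (Ψ y)).comp (fderiv ℝ Ψ y)) y :=
      (hΦd (Ψ y)).hasFDerivAt.comp y (hΨd y).hasFDerivAt
    have h2 : Φ ∘ Ψ = id := funext hΦΨ
    rw [h2] at h1
    have h3 := h1.unique (hasFDerivAt_id y)
    have h4 := ContinuousLinearMap.ext_iff.1 h3 v
    simpa using h4
  have htru : ∀ s, u s = 0 → deriv u s ≠ 0 := by
    intro s hs0 hds
    set t := (Ψ (s, c)).2 with hdeft
    have hΨy : Ψ (s, c) = (0, t) := Prod.ext hs0 rfl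
    have hv : (fderiv ℝ Ψ (s, c) ((1:ℝ), (0:ℝ))).1 = 0 := by
      rw [← huderiv]; exact hds
    set v := fderiv ℝ Ψ (s, c) ((1:ℝ), (0:ℝ)) with hdefv
    have hAv : fderiv ℝ Φ (Ψ (s, c)) v = ((1:ℝ), (0:ℝ)) := hABid (s, c) _
    have hβ : v.2 ≠ 0 := by
      intro h0
      have hv0 : v = 0 := Prod.ext hv h0
      rw [hv0, map_zero] at hAv
      exact one_ne_zero (congrArg Prod.fst hAv).symm
    have h01 : ((0:ℝ), (1:ℝ)) = (v.2)⁻¹ • v := by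
      have : (v.2)⁻¹ • v = ((v.2)⁻¹ * v.1, (v.2)⁻¹ * v.2) := rfl
      rw [this, hv, mul_zero, inv_mul_cancel₀ hβ]
    have hA01 : fderiv ℝ Φ (Ψ (s, c)) ((0:ℝ), (1:ℝ)) = (v.2)⁻¹ • ((1:ℝ), (0:ℝ)) := by
      rw [h01, _root_.map_smul, hAv]
    have hderivht : deriv h t = 0 := by
      rw [hhderiv t, ← hΨy, hA01]
      simp
    have hht : h t = c := by
      show (Φ (0, t)).2 = c
      rw [← hΨy, hΦΨ (s, c)]
    exact hcZ ⟨t, hderivht, hht⟩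
  obtain ⟨N, hN, pm, pp, h1, h2, h3, h4⟩ := main1d hudiff huper htru
  have hmem : ∀ x₁ : ℝ, ((x₁, c) ∈ Φ '' fundDom ↔ u x₁ ∈ Set.Icc 0 (2*π)) := by
    intro x₁
    constructor
    · rintro ⟨z, hz, hΦz⟩
      have hΨx : Ψ (x₁, c) = z := by rw [← hΦz, hΨΦ z]
      simp only [fundDom, Set.mem_prod] at hz
      show (Ψ (x₁, c)).1 ∈ Set.Icc 0 (2*π)
      rw [hΨx]; exact hz.1
    · intro hx
      refine ⟨Ψ (x₁, c), ?_, hΦΨ _⟩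
      simp only [fundDom, Set.mem_prod]
      exact ⟨hx, hstripΨ x₁⟩
  refine ⟨N, hN, pm, pp, h1, h2, ?_, ?_⟩
  · rw [show {x₁ : ℝ | (x₁, c) ∈ Φ '' fundDom} = {x : ℝ | u x ∈ Set.Icc 0 (2*π)} from
      Set.ext fun x => hmem x]
    exact h3
  · intro i hi
    have hu0 : u (pm i) = 0 := by
      obtain ⟨z, hz, hΦz⟩ := hi
      have hΨx : Ψ (pm i, c) = z := by rw [← hΦz, hΨΦ z]
      have hz1 := (Set.mem_prod.1 hz).1
      show (Ψ (pm i, c)).1 = 0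
      rw [hΨx]
      exact hz1
    obtain ⟨j, hj1, hj2⟩ := h4 i hu0
    refine ⟨j, hj1, ⟨Ψ (pp j, c), ?_, hΦΨ _⟩⟩
    refine Set.mem_prod.2 ⟨?_, hstripΨ _⟩
    exact hj2
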